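/- arXiv:1407.6981 — 4 statements merged into one kernel-verified Lean document; each statement's English description precedes it below -/
import Mathlib

section
/- Let f ∈ (0,1], let k ≥ 1, and let b₁, b₂ ∈ {0,1}^k be two Bloom-filter bit vectors each of Hamming weight exactly h. For every set R ⊆ {0,1}^k of possible Permanent randomized responses, P_f(B' ∈ R | b₁) ≤ exp(ε_∞) · P_f(B' ∈ R | b₂), where ε_∞ = 2h · ln((1 − f/2)/(f/2)) and P_f(B' ∈ R | b) = Σ_{b' ∈ R} P_f(b' | b). In other words, the Permanent randomized response satisfies ε_∞-differential privacy with ε_∞ = 2h·ln((1 − f/2)/(f/2)). -/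
/-- The Permanent randomized response probability: each bit of `b` is kept with
probability `1 - f` and replaced by a uniformly random bit with probability `f`,
so `P_f(b' | b) = ∏ i, ρ(b'_i, b_i)` with `ρ(1,1) = ρ(0,0) = 1 - f/2` and
`ρ(1,0) = ρ(0,1) = f/2`. -/
noncomputable def permProb (f : ℝ) {k : ℕ} (b' b : Fin k → Bool) : ℝ :=
  ∏ i, if b' i = b i then 1 - f / 2 else f / 2

/-- The Permanent randomized response satisfies `ε∞`-differential privacy with
`ε∞ = 2h · ln((1 − f/2)/(f/2))`. -/
theorem permanent_rr_differential_privacy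
    (f : ℝ) (hf0 : 0 < f) (hf1 : f ≤ 1)
    (k h : ℕ) (hk : 1 ≤ k)
    (b₁ b₂ : Fin k → Bool)
    (hb₁ : (Finset.univ.filter (fun i => b₁ i = true)).card = h)
    (hb₂ : (Finset.univ.filter (fun i => b₂ i = true)).card = h)
    (R : Finset (Fin k → Bool)) :
    ∑ b' ∈ R, permProb f b' b₁ ≤
      Real.exp (2 * h * Real.log ((1 - f / 2) / (f / 2))) *
        ∑ b' ∈ R, permProb f b' b₂ := by
  set a : ℝ := f / 2 with ha
  set c : ℝ := 1 - f / 2 with hc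
  have ha0 : 0 < a := by simp [ha]; linarith
  have hac : a ≤ c := by simp [ha, hc]; linarith
  have hc0 : 0 < c := lt_of_lt_of_le ha0 hac
  have hr0 : 0 < c / a := div_pos hc0 ha0
  have hr1 : (1 : ℝ) ≤ c / a := (one_le_div ha0).2 hac
  -- number of differing positions
  set S : Finset (Fin k) := Finset.univ.filter (fun i => b₁ i ≠ b₂ i) with hS
  have hd : S.card ≤ 2 * h := by
    have hsub : S ⊆ (Finset.univ.filter (fun i => b₁ i = true)) ∪
        (Finset.univ.filter (fun i => b₂ i = true)) := by
      intro i hi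
      simp only [hS, Finset.mem_filter, Finset.mem_univ, true_and] at hi
      simp only [Finset.mem_union, Finset.mem_filter, Finset.mem_univ, true_and]
      cases h1 : b₁ i <;> cases h2 : b₂ i <;> simp_all
    calc S.card ≤ _ := Finset.card_le_card hsub
      _ ≤ (Finset.univ.filter (fun i => b₁ i = true)).card +
          (Finset.univ.filter (fun i => b₂ i = true)).card := Finset.card_union_le _ _
      _ = 2 * h := by rw [hb₁, hb₂]; ring
  have key : ∀ b' : Fin k → Bool,
      permProb f b' b₁ ≤ (c / a) ^ (2 * h) * permProb f b' b₂ := by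
    intro b'
    have step1 : permProb f b' b₁ ≤ (c / a) ^ S.card * permProb f b' b₂ := by
      have hpow : (c / a) ^ S.card = ∏ i : Fin k, (if b₁ i ≠ b₂ i then c / a else 1) := by
        rw [← Finset.prod_filter, ← hS, Finset.prod_const]
      unfold permProb
      rw [hpow, ← Finset.prod_mul_distrib]
      apply Finset.prod_le_prod
      · intro i _
        split <;> linarith
      · intro i _
        by_cases h12 : b₁ i = b₂ i
        · simp [h12]
        · have hne : b₁ i ≠ b₂ i := h12
          by_cases hb : b' i = b₂ i
          · have : b' i ≠ b₁ i := fun hh => h12 (hh ▸ hb)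
            simp only [if_neg this, if_pos hb, if_pos hne]
            rw [div_mul_eq_mul_div, le_div_iff₀ ha0]
            nlinarith
          · have : b' i = b₁ i := by
              cases hb1 : b₁ i <;> cases hb2 : b₂ i <;> cases hb' : b' i <;> simp_all
            simp only [if_pos this, if_neg hb, if_pos hne]
            have heq : c / a * (f / 2) = c := by
              rw [hc, ha]; field_simp
            rw [heq, hc]
    calc permProb f b' b₁ ≤ (c / a) ^ S.card * permProb f b' b₂ := step1
      _ ≤ (c / a) ^ (2 * h) * permProb f b' b₂ := by
        apply mul_le_mul_of_nonneg_right (pow_le_pow_right₀ hr1 hd)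
        apply Finset.prod_nonneg
        intro i _
        split <;> [linarith; linarith]
  have hexp : Real.exp (2 * h * Real.log (c / a)) = (c / a) ^ (2 * h) := by
    have : (2 * (h : ℝ)) * Real.log (c / a) = ((2 * h : ℕ) : ℝ) * Real.log (c / a) := by
      push_cast; ring
    rw [this, Real.exp_nat_mul, Real.exp_log hr0]
  rw [hexp, Finset.mul_sum]
  exact Finset.sum_le_sum fun b' _ => key b'
end

section
/- Let 0 < p < q < 1 and f ∈ [0,1), and set q* = (1/2)f(p+q) + (1−f)q and p* = (1/2)f(p+q) + (1−f)p. Let b₁, b₂ ∈ {0,1}^k be two bit vectors each of Hamming weight exactly h. Then for every set R ⊆ {0,1}^k of possible reports, Q(S ∈ R | b₁) ≤ exp(ε₁) · Q(S ∈ R | b₂), where ε₁ = h · ln( q*(1 − p*) / (p*(1 − q*)) ) and Q(S ∈ R | b) = Σ_{s ∈ R} Q(s | b). In other words, the Instantaneous randomized response satisfies ε₁-differential privacy. -/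
/-- The Instantaneous randomized response probability: given marginal probabilities
`pstar, qstar`, `Q(s | b) = ∏ i, φ(s_i, b_i)` where `φ(s_i,1) = qstar^{s_i}(1-qstar)^{1-s_i}`
and `φ(s_i,0) = pstar^{s_i}(1-pstar)^{1-s_i}`. -/
noncomputable def instProb (pstar qstar : ℝ) {k : ℕ} (s b : Fin k → Bool) : ℝ :=
  ∏ i, if b i then (if s i then qstar else 1 - qstar)
       else (if s i then pstar else 1 - pstar)

set_option maxHeartbeats 1000000 in
/-- The Instantaneous randomized response satisfies `ε₁`-differential privacy with
`ε₁ = h · ln(q*(1 − p*)/(p*(1 − q*)))`, where `q* = (1/2)f(p+q) + (1−f)q` and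
`p* = (1/2)f(p+q) + (1−f)p`. -/
theorem instantaneous_rr_differential_privacy
    (p q f : ℝ) (hp : 0 < p) (hpq : p < q) (hq : q < 1)
    (hf0 : 0 ≤ f) (hf1 : f < 1)
    (pstar qstar : ℝ)
    (hqstar : qstar = 1 / 2 * f * (p + q) + (1 - f) * q)
    (hpstar : pstar = 1 / 2 * f * (p + q) + (1 - f) * p)
    (k h : ℕ) (b₁ b₂ : Fin k → Bool)
    (hb₁ : (Finset.univ.filter (fun i => b₁ i = true)).card = h)
    (hb₂ : (Finset.univ.filter (fun i => b₂ i = true)).card = h)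
    (R : Finset (Fin k → Bool)) :
    ∑ s ∈ R, instProb pstar qstar s b₁ ≤
      Real.exp (h * Real.log (qstar * (1 - pstar) / (pstar * (1 - qstar)))) *
        ∑ s ∈ R, instProb pstar qstar s b₂ := by
  have hps : 0 < pstar := by nlinarith
  have hlt : pstar < qstar := by nlinarith
  have hqs1 : qstar < 1 := by nlinarith
  have hps1 : pstar < 1 := lt_trans hlt hqs1
  have hqs : 0 < qstar := lt_trans hps hlt
  set A : ℝ := qstar / pstar with hA
  set B : ℝ := (1 - pstar) / (1 - qstar) with hB
  have hA1 : 1 ≤ A := (one_le_div hps).2 (le_of_lt hlt)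
  have hB1 : 1 ≤ B := (one_le_div (by linarith)).2 (by linarith)
  have hAB : qstar * (1 - pstar) / (pstar * (1 - qstar)) = A * B := by
    rw [hA, hB, div_mul_div_comm]
  -- the per-coordinate bounding factor
  set d : Fin k → ℝ := fun i => (if b₁ i then A else 1) * (if b₂ i then B else 1) with hd
  have hprodd : ∏ i, d i = A ^ h * B ^ h := by
    rw [hd, Finset.prod_mul_distrib]
    congr 1
    · rw [Finset.prod_ite, Finset.prod_const, Finset.prod_const_one, mul_one, hb₁]
    · rw [Finset.prod_ite, Finset.prod_const, Finset.prod_const_one, mul_one, hb₂]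
  have key : ∀ s : Fin k → Bool,
      instProb pstar qstar s b₁ ≤ (A ^ h * B ^ h) * instProb pstar qstar s b₂ := by
    intro s
    rw [← hprodd, instProb, instProb, ← Finset.prod_mul_distrib]
    apply Finset.prod_le_prod
    · intro i _
      split <;> split <;> linarith
    · intro i _
      have hApq : A * pstar = qstar := div_mul_cancel₀ _ hps.ne'
      have hBq : B * (1 - qstar) = 1 - pstar := div_mul_cancel₀ _ (by linarith)
      have hA0 : (0:ℝ) ≤ A := by linarith
      have hBqs : pstar ≤ B * qstar := by
        nlinarith [mul_le_mul_of_nonneg_right hB1 hqs.le]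
      have hApp : 1 - qstar ≤ A * (1 - pstar) := by
        nlinarith [mul_le_mul_of_nonneg_right hA1 (by linarith : (0:ℝ) ≤ 1 - pstar)]
      rcases hb1 : b₁ i <;> rcases hb2 : b₂ i <;> rcases hs : s i <;>
          simp only [hd, hb1, hb2, hs, Bool.false_eq_true, if_false, if_true,
            eq_self_iff_true, ite_true, ite_false, one_mul, mul_one]
      all_goals first
        | linarith
        | linarith [hApq]
        | exact hBqs
        | exact hApp
        | nlinarith [hBq]
        | nlinarith [hApp, mul_le_mul_of_nonneg_left hBq.le hA0,
            mul_le_mul_of_nonneg_left hBq.ge hA0]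
        | nlinarith [hApq, mul_le_mul_of_nonneg_left hBqs hA0]
  have hexp : Real.exp (h * Real.log (qstar * (1 - pstar) / (pstar * (1 - qstar))))
      = A ^ h * B ^ h := by
    rw [hAB, Real.exp_nat_mul, Real.exp_log (by positivity), mul_pow]
  rw [hexp, Finset.mul_sum]
  exact Finset.sum_le_sum fun s _ => key s
end

section
/- Let f ∈ (0,1], let k ≥ 1, and let b₁, b₂ ∈ {0,1}^k be two bit vectors each of Hamming weight exactly h. Then for every fixed outcome b' ∈ {0,1}^k, P_f(b' | b₁) ≤ ((1 − f/2)/(f/2))^{2h} · P_f(b' | b₂), i.e., the pointwise likelihood ratio of the Permanent randomized response for any two weight-h inputs is at most ((1 − f/2)/(f/2))^{2h}. -/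
open Finset

lemma ite_eq_le_div_pow_mul_ite_eq {p q : ℝ} (hq : 0 < q) (hqp : q ≤ p) (a x y : Bool) :
    (if a = x then p else q) ≤ (p / q) ^ (if x ≠ y then 1 else 0) * (if a = y then p else q) := by
  by_cases hxy : x = y
  · simp [hxy]
  · have hle : (if a = x then p else q) ≤ p := by split_ifs <;> linarith
    have hge : q ≤ (if a = y then p else q) := by split_ifs <;> linarith
    calc (if a = x then p else q) ≤ p / q * q := by rwa [div_mul_cancel₀ p hq.ne']
      _ ≤ (p / q) ^ (if x ≠ y then 1 else 0) * (if a = y then p else q) := by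
        rw [if_pos hxy, pow_one]
        exact mul_le_mul_of_nonneg_left hge (div_nonneg (hq.le.trans hqp) hq.le)

lemma permProb_nonneg {f : ℝ} (hf0 : 0 ≤ f) (hf2 : f ≤ 2) {k : ℕ} (b' b : Fin k → Bool) :
    0 ≤ permProb f b' b :=
  prod_nonneg fun i _ => by split_ifs <;> linarith

theorem permProb_le_pow_hammingDist_mul {f : ℝ} (hf0 : 0 < f) (hf1 : f ≤ 1) {k : ℕ}
    (b' b₁ b₂ : Fin k → Bool) :
    permProb f b' b₁ ≤ ((1 - f / 2) / (f / 2)) ^ hammingDist b₁ b₂ * permProb f b' b₂ := by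
  have hq : 0 < f / 2 := by linarith
  have hqp : f / 2 ≤ 1 - f / 2 := by linarith
  calc permProb f b' b₁
      ≤ ∏ i, ((1 - f / 2) / (f / 2)) ^ (if b₁ i ≠ b₂ i then 1 else 0) *
          (if b' i = b₂ i then 1 - f / 2 else f / 2) :=
        prod_le_prod (fun i _ => by split_ifs <;> linarith)
          (fun i _ => ite_eq_le_div_pow_mul_ite_eq hq hqp _ _ _)
    _ = ((1 - f / 2) / (f / 2)) ^ hammingDist b₁ b₂ * permProb f b' b₂ := by
        rw [prod_mul_distrib, prod_pow_eq_pow_sum, sum_boole, Nat.cast_id]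
        rfl

lemma hammingDist_const_false {ι : Type*} [Fintype ι] (b : ι → Bool) :
    hammingDist b (fun _ => false) = #{i | b i = true} := by
  simp [hammingDist]

lemma hammingDist_le_card_true_add_card_true {ι : Type*} [Fintype ι] (b₁ b₂ : ι → Bool) :
    hammingDist b₁ b₂ ≤ #{i | b₁ i = true} + #{i | b₂ i = true} := by
  calc hammingDist b₁ b₂ ≤ hammingDist b₁ (fun _ => false) + hammingDist (fun _ => false) b₂ :=
        hammingDist_triangle _ _ _
    _ = #{i | b₁ i = true} + #{i | b₂ i = true} := by
        rw [hammingDist_comm _ b₂, hammingDist_const_false, hammingDist_const_false]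

theorem permanent_rr_pointwise_ratio_general
    (f : ℝ) (hf0 : 0 < f) (hf1 : f ≤ 1)
    (k h : ℕ)
    (b₁ b₂ : Fin k → Bool)
    (hb₁ : (Finset.univ.filter (fun i => b₁ i = true)).card = h)
    (hb₂ : (Finset.univ.filter (fun i => b₂ i = true)).card = h)
    (b' : Fin k → Bool) :
    permProb f b' b₁ ≤ ((1 - f / 2) / (f / 2)) ^ (2 * h) * permProb f b' b₂ := by
  have hdist : hammingDist b₁ b₂ ≤ 2 * h := by
    have := hammingDist_le_card_true_add_card_true b₁ b₂
    omega
  have hratio : 1 ≤ (1 - f / 2) / (f / 2) := by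
    rw [one_le_div (by linarith)]
    linarith
  calc permProb f b' b₁ ≤ ((1 - f / 2) / (f / 2)) ^ hammingDist b₁ b₂ * permProb f b' b₂ :=
        permProb_le_pow_hammingDist_mul hf0 hf1 b' b₁ b₂
    _ ≤ ((1 - f / 2) / (f / 2)) ^ (2 * h) * permProb f b' b₂ :=
        mul_le_mul_of_nonneg_right (pow_le_pow_right₀ hratio hdist)
          (permProb_nonneg hf0.le (by linarith) b' b₂)

/-- The pointwise likelihood ratio of the Permanent randomized response for any two
weight-`h` inputs is at most `((1 − f/2)/(f/2))^(2h)`. -/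
theorem permanent_rr_pointwise_ratio
    (f : ℝ) (hf0 : 0 < f) (hf1 : f ≤ 1)
    (k h : ℕ) (hk : 1 ≤ k)
    (b₁ b₂ : Fin k → Bool)
    (hb₁ : (Finset.univ.filter (fun i => b₁ i = true)).card = h)
    (hb₂ : (Finset.univ.filter (fun i => b₂ i = true)).card = h)
    (b' : Fin k → Bool) :
    permProb f b' b₁ ≤ ((1 - f / 2) / (f / 2)) ^ (2 * h) * permProb f b' b₂ :=
  permanent_rr_pointwise_ratio_general f hf0 hf1 k h b₁ b₂ hb₁ hb₂ b'
end

section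
/- Let f ∈ (0,1) and 0 < p < q < 1, and set q* = (1/2)f(p+q) + (1−f)q and p* = (1/2)f(p+q) + (1−f)p. Then q*(1 − p*) / (p*(1 − q*)) < ((1 − f/2)/(f/2))². Consequently, for any number of hash functions h ≥ 1, the one-report privacy bound ε₁ = h·ln(q*(1−p*)/(p*(1−q*))) is strictly smaller than the longitudinal privacy bound ε_∞ = 2h·ln((1 − f/2)/(f/2)). -/
/-- For `f ∈ (0,1)` and `0 < p < q < 1`, the one-report ratio bound
`q*(1 − p*)/(p*(1 − q*))` is strictly smaller than `((1 − f/2)/(f/2))²`; consequently,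
for any number of hash functions `h ≥ 1`, the one-report privacy bound
`ε₁ = h·ln(q*(1−p*)/(p*(1−q*)))` is strictly smaller than the longitudinal privacy
bound `ε∞ = 2h·ln((1 − f/2)/(f/2))`. -/
theorem rappor_eps1_lt_epsInfty
    (f p q : ℝ) (hf0 : 0 < f) (hf1 : f < 1)
    (hp : 0 < p) (hpq : p < q) (hq : q < 1)
    (pstar qstar : ℝ)
    (hqstar : qstar = 1 / 2 * f * (p + q) + (1 - f) * q)
    (hpstar : pstar = 1 / 2 * f * (p + q) + (1 - f) * p) :
    qstar * (1 - pstar) / (pstar * (1 - qstar)) < ((1 - f / 2) / (f / 2)) ^ 2 ∧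
    ∀ h : ℕ, 1 ≤ h →
      h * Real.log (qstar * (1 - pstar) / (pstar * (1 - qstar))) <
        2 * h * Real.log ((1 - f / 2) / (f / 2)) := by
  subst hqstar hpstar
  set A := (1 / 2 * f * (p + q) + (1 - f) * q) *
      (1 - (1 / 2 * f * (p + q) + (1 - f) * p)) with hA
  set B := (1 / 2 * f * (p + q) + (1 - f) * p) *
      (1 - (1 / 2 * f * (p + q) + (1 - f) * q)) with hB
  have hps : (0:ℝ) < 1 / 2 * f * (p + q) + (1 - f) * p := by nlinarith
  have h1q : (0:ℝ) < 1 - (1 / 2 * f * (p + q) + (1 - f) * q) := by nlinarith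
  have hqs : (0:ℝ) < 1 / 2 * f * (p + q) + (1 - f) * q := by nlinarith
  have h1p : (0:ℝ) < 1 - (1 / 2 * f * (p + q) + (1 - f) * p) := by nlinarith
  have hBpos : 0 < B := mul_pos hps h1q
  have hApos : 0 < A := mul_pos hqs h1p
  have hfP : (0:ℝ) < f / 2 := by linarith
  have hR : (0:ℝ) < (1 - f / 2) / (f / 2) := by
    apply div_pos <;> linarith
  have e1 : (1 / 2 * f * (p + q) + (1 - f) * q) * (f / 2) <
      (1 / 2 * f * (p + q) + (1 - f) * p) * (1 - f / 2) := by nlinarith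
  have e2 : (1 - (1 / 2 * f * (p + q) + (1 - f) * p)) * (f / 2) <
      (1 - (1 / 2 * f * (p + q) + (1 - f) * q)) * (1 - f / 2) := by nlinarith
  have key : A / B < ((1 - f / 2) / (f / 2)) ^ 2 := by
    rw [div_pow, div_lt_div_iff₀ hBpos (by positivity)]
    have hprod := mul_lt_mul'' e1 e2
      (by positivity) (by positivity)
    calc A * (f / 2) ^ 2
        = ((1 / 2 * f * (p + q) + (1 - f) * q) * (f / 2)) *
          ((1 - (1 / 2 * f * (p + q) + (1 - f) * p)) * (f / 2)) := by rw [hA]; ring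
      _ < ((1 / 2 * f * (p + q) + (1 - f) * p) * (1 - f / 2)) *
          ((1 - (1 / 2 * f * (p + q) + (1 - f) * q)) * (1 - f / 2)) := hprod
      _ = (1 - f / 2) ^ 2 * B := by rw [hB]; ring
  refine ⟨key, ?_⟩
  intro h hh
  have hlog : Real.log (A / B) < Real.log (((1 - f / 2) / (f / 2)) ^ 2) :=
    Real.log_lt_log (div_pos hApos hBpos) key
  rw [Real.log_pow] at hlog
  push_cast at hlog ⊢
  have hhpos : (0:ℝ) < (h:ℝ) := by exact_mod_cast hh
  calc (h:ℝ) * Real.log (A / B) < (h:ℝ) * (2 * Real.log ((1 - f / 2) / (f / 2))) :=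
        by exact mul_lt_mul_of_pos_left hlog hhpos
    _ = 2 * (h:ℝ) * Real.log ((1 - f / 2) / (f / 2)) := by ring
end
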